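/- arXiv:2402.14003 — 10 statements merged into one kernel-verified Lean document; each statement's English description precedes it below -/
import Mathlib

section
/- Proposition 1 (monotonicity of the non-cognitive signal): Suppose sender optimality holds for a reasonable wage function ŵ : C → ℝ, and suppose m̂₂(t) ≤ m₂° for all t ∈ T. Then the non-cognitive strategy m̂₂ is nonincreasing on T: for all t, t' ∈ T with t < t', m̂₂(t) ≥ m̂₂(t'). -/
/-!
If a higher type `t'` sent a strictly larger non-cognitive signal than a lower type `t`, then
`m₂(t) < m₂°`. Since `m ↦ α m - h m` is strictly concave with maximum at `m₂°`, it is strictly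
increasing below `m₂°`, so with a reasonable wage type `t` would gain by raising `m₂` unless its
budget binds: `m₁(t) + m₂(t) = M`. Hence `m₁(t') ≤ M - m₂(t') < m₁(t)`. But single crossing forces
optimal cognitive signals to be nondecreasing in the type (add the two revealed-preference
inequalities), a contradiction.
-/

open Set

theorem StrictConcaveOn.strictMonoOn_of_isMaxOn {s : Set ℝ} {g : ℝ → ℝ} {m : ℝ}
    (hg : StrictConcaveOn ℝ s g) (hm : m ∈ s) (hmax : IsMaxOn g s m) :
    StrictMonoOn g (s ∩ Iic m) := by
  have lt_of_mem_Ioo : ∀ x ∈ s, ∀ y ∈ Ioo x m, g x < g y := fun x hx y hy => by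
    have hseg : y ∈ openSegment ℝ x m := by rwa [openSegment_eq_Ioo (hy.1.trans hy.2)]
    have := hg.lt_on_openSegment hx hm (hy.1.trans hy.2).ne hseg
    rwa [min_eq_left (show g x ≤ g m from hmax hx)] at this
  rintro x ⟨hx, -⟩ y ⟨hy, hym : y ≤ m⟩ hxy
  rcases hym.lt_or_eq with hym | rfl
  · exact lt_of_mem_Ioo x hx y ⟨hxy, hym⟩
  · have hmid : (x + y) / 2 ∈ Ioo x y := ⟨left_lt_add_div_two.2 hxy, add_div_two_lt_right.2 hxy⟩
    have hmid_mem : (x + y) / 2 ∈ s := by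
      rw [← openSegment_eq_Ioo hxy] at hmid
      exact hg.1.openSegment_subset hx hy hmid
    exact (lt_of_mem_Ioo x hx _ hmid).trans_le (hmax hmid_mem)

namespace Signaling

def IsReasonableWage (M α : ℝ) (w : ℝ → ℝ → ℝ) : Prop :=
  ∀ a q q' : ℝ, 0 ≤ a → 0 ≤ q → a + q < M → 0 ≤ q' → a + q' < M →
    w a q - w a q' = α * (q - q')

def IsBestResponse (M : ℝ) (w : ℝ → ℝ → ℝ) (h : ℝ → ℝ) (c : ℝ → ℝ → ℝ) (t a b : ℝ) : Prop :=
  ∀ p q : ℝ, 0 ≤ p → 0 ≤ q → p + q ≤ M → w p q - h q - c p t ≤ w a b - h b - c a t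

def StrictSingleCrossing (T : Set ℝ) (c : ℝ → ℝ → ℝ) : Prop :=
  ∀ a a' t t', a > a' → 0 ≤ a' → t ∈ T → t' ∈ T → t > t' → c a t + c a' t' < c a t' + c a' t

variable {M α : ℝ} {w : ℝ → ℝ → ℝ} {h : ℝ → ℝ} {c : ℝ → ℝ → ℝ}

theorem add_eq_of_isBestResponse_of_strictMonoOn {t a b b' : ℝ}
    (hw : IsReasonableWage M α w) (hopt : IsBestResponse M w h c t a b)
    (ha : 0 ≤ a) (hb : 0 ≤ b) (hab : a + b ≤ M) (hbb' : b < b')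
    (hmono : StrictMonoOn (fun q => α * q - h q) (Icc b b')) : a + b = M := by
  by_contra hne
  have hslack : a + b < M := hab.lt_of_ne hne
  set q := min b' ((b + (M - a)) / 2)
  have hbq : b < q := lt_min hbb' (by linarith)
  have hqb' : q ≤ b' := min_le_left _ _
  have hslack_q : a + q < M := by linarith [min_le_right b' ((b + (M - a)) / 2)]
  have hdev := hopt a q ha (hb.trans hbq.le) hslack_q.le
  have hwage := hw a q b ha (hb.trans hbq.le) hslack_q hb hslack
  have hgain : α * b - h b < α * q - h q :=
    hmono ⟨le_rfl, hbb'.le⟩ ⟨hbq.le, hqb'⟩ hbq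
  linarith

theorem le_of_isBestResponse {T : Set ℝ} {t t' a b a' b' : ℝ}
    (hc : StrictSingleCrossing T c) (ht : t ∈ T) (ht' : t' ∈ T) (htt' : t < t')
    (hopt : IsBestResponse M w h c t a b) (hopt' : IsBestResponse M w h c t' a' b')
    (hfeas : 0 ≤ a ∧ 0 ≤ b ∧ a + b ≤ M) (hfeas' : 0 ≤ a' ∧ 0 ≤ b' ∧ a' + b' ≤ M) :
    a ≤ a' := by
  by_contra! ha
  have hdev := hopt a' b' hfeas'.1 hfeas'.2.1 hfeas'.2.2
  have hdev' := hopt' a b hfeas.1 hfeas.2.1 hfeas.2.2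
  have hcross := hc a a' t' t ha hfeas'.1 ht' ht htt'
  linarith

end Signaling

open Signaling

theorem noncognitive_signal_nonincreasing_general
    (tl th M α m2o : ℝ) (c : ℝ → ℝ → ℝ) (h : ℝ → ℝ)
    (m1 m2 : ℝ → ℝ) (w : ℝ → ℝ → ℝ)
    -- strict single crossing property of c
    (hsc : ∀ a a' t t', a > a' → 0 ≤ a' → t ∈ Icc tl th → t' ∈ Icc tl th → t > t' →
      c a t + c a' t' < c a t' + c a' t)
    -- strict convexity of h
    (hconv : StrictConvexOn ℝ (Ici 0) h)
    -- m2o is the unique maximizer of m ↦ α⬝m − h m over ℝ≥0, with 0 < m2o < M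
    (hmax : ∀ m, 0 ≤ m → m ≠ m2o → α * m - h m < α * m2o - h m2o)
    -- feasibility of the strategies
    (hfeas : ∀ t ∈ Icc tl th, 0 ≤ m1 t ∧ 0 ≤ m2 t ∧ m1 t + m2 t ≤ M)
    -- sender optimality
    (hopt : ∀ t ∈ Icc tl th, ∀ p q : ℝ, 0 ≤ p → 0 ≤ q → p + q ≤ M →
      w p q - h q - c p t ≤ w (m1 t) (m2 t) - h (m2 t) - c (m1 t) t)
    -- the wage function is reasonable
    (hreas : ∀ a q q' : ℝ, 0 ≤ a → 0 ≤ q → a + q < M → 0 ≤ q' → a + q' < M →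
      w a q - w a q' = α * (q - q'))
    -- the bound on the non-cognitive signal derived from optimality and convexity
    (hbound : ∀ t ∈ Icc tl th, m2 t ≤ m2o) :
    ∀ t ∈ Icc tl th, ∀ t' ∈ Icc tl th, t < t' → m2 t' ≤ m2 t := by
  intro t ht t' ht' htt'
  by_contra! hlt
  have hft := hfeas t ht
  have hm2o : m2o ∈ Ici (0 : ℝ) := hft.2.1.trans (hbound t ht)
  have hconcave : StrictConcaveOn ℝ (Ici 0) (fun q => α * q - h q) :=
    ((LinearMap.mul ℝ ℝ α).concaveOn (convex_Ici 0)).sub_strictConvexOn hconv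
  have hmaxOn : IsMaxOn (fun q => α * q - h q) (Ici 0) m2o := isMaxOn_iff.2 fun q hq => by
    rcases eq_or_ne q m2o with rfl | hne
    exacts [le_rfl, (hmax q hq hne).le]
  have hnet := hconcave.strictMonoOn_of_isMaxOn hm2o hmaxOn
  have hbudget : m1 t + m2 t = M :=
    add_eq_of_isBestResponse_of_strictMonoOn hreas (hopt t ht) hft.1 hft.2.1 hft.2.2
      (hlt.trans_le (hbound t' ht')) (hnet.mono fun q hq => ⟨hft.2.1.trans hq.1, hq.2⟩)
  have hm1 : m1 t ≤ m1 t' :=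
    le_of_isBestResponse hsc ht ht' htt' (hopt t ht) (hopt t' ht') hft (hfeas t' ht')
  linarith [(hfeas t' ht').2.2]

/-- Proposition 1 (monotonicity of the non-cognitive signal): under sender optimality for a
reasonable wage function, the non-cognitive strategy `m2` is nonincreasing on `[tl, th]`. -/
theorem noncognitive_signal_nonincreasing
    (tl th M α m2o : ℝ) (c : ℝ → ℝ → ℝ) (h : ℝ → ℝ)
    (m1 m2 : ℝ → ℝ) (w : ℝ → ℝ → ℝ)
    (htl : 0 < tl) (htlth : tl < th) (hM : 0 < M) (hα : 0 ≤ α)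
    -- strict single crossing property of c
    (hsc : ∀ a a' t t', a > a' → 0 ≤ a' → t ∈ Icc tl th → t' ∈ Icc tl th → t > t' →
      c a t + c a' t' < c a t' + c a' t)
    -- strict convexity of h
    (hconv : StrictConvexOn ℝ (Ici 0) h)
    -- m2o is the unique maximizer of m ↦ α⬝m − h m over ℝ≥0, with 0 < m2o < M
    (hm2o : 0 < m2o ∧ m2o < M)
    (hmax : ∀ m, 0 ≤ m → m ≠ m2o → α * m - h m < α * m2o - h m2o)
    -- feasibility of the strategies
    (hfeas : ∀ t ∈ Icc tl th, 0 ≤ m1 t ∧ 0 ≤ m2 t ∧ m1 t + m2 t ≤ M)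
    -- sender optimality
    (hopt : ∀ t ∈ Icc tl th, ∀ p q : ℝ, 0 ≤ p → 0 ≤ q → p + q ≤ M →
      w p q - h q - c p t ≤ w (m1 t) (m2 t) - h (m2 t) - c (m1 t) t)
    -- the wage function is reasonable
    (hreas : ∀ a q q' : ℝ, 0 ≤ a → 0 ≤ q → a + q < M → 0 ≤ q' → a + q' < M →
      w a q - w a q' = α * (q - q'))
    -- the bound on the non-cognitive signal derived from optimality and convexity
    (hbound : ∀ t ∈ Icc tl th, m2 t ≤ m2o) :
    ∀ t ∈ Icc tl th, ∀ t' ∈ Icc tl th, t < t' → m2 t' ≤ m2 t :=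
  noncognitive_signal_nonincreasing_general tl th M α m2o c h m1 m2 w hsc hconv hmax hfeas hopt
    hreas hbound
end

section
/- Lemma 1(a): Suppose sender optimality holds for a reasonable wage function ŵ : C → ℝ, and suppose m̂₂(t) ≤ m₂° for all t ∈ T. If m̂₁(t) + m̂₂(t) = M for some t ∈ T with t < t̄, then m̂₁(t') + m̂₂(t') = M for all t' ∈ T with t' > t. -/
open Set

/-- Lemma 1(a): if the resource constraint binds for a type `t < th`, it binds for every
higher type. -/
theorem binding_constraint_upward_closed
    (tl th M α m2o : ℝ) (c : ℝ → ℝ → ℝ) (h : ℝ → ℝ)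
    (m1 m2 : ℝ → ℝ) (w : ℝ → ℝ → ℝ)
    (htl : 0 < tl) (htlth : tl < th) (hM : 0 < M) (hα : 0 ≤ α)
    -- strict single crossing property of c
    (hsc : ∀ a a' t t', a > a' → 0 ≤ a' → t ∈ Icc tl th → t' ∈ Icc tl th → t > t' →
      c a t + c a' t' < c a t' + c a' t)
    -- strict convexity of h
    (hconv : StrictConvexOn ℝ (Ici 0) h)
    -- m2o is the unique maximizer of m ↦ α⬝m − h m over ℝ≥0, with 0 < m2o < M
    (hm2o : 0 < m2o ∧ m2o < M)
    (hmax : ∀ m, 0 ≤ m → m ≠ m2o → α * m - h m < α * m2o - h m2o)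
    -- feasibility of the strategies
    (hfeas : ∀ t ∈ Icc tl th, 0 ≤ m1 t ∧ 0 ≤ m2 t ∧ m1 t + m2 t ≤ M)
    -- sender optimality
    (hopt : ∀ t ∈ Icc tl th, ∀ p q : ℝ, 0 ≤ p → 0 ≤ q → p + q ≤ M →
      w p q - h q - c p t ≤ w (m1 t) (m2 t) - h (m2 t) - c (m1 t) t)
    -- the wage function is reasonable
    (hreas : ∀ a q q' : ℝ, 0 ≤ a → 0 ≤ q → a + q < M → 0 ≤ q' → a + q' < M →
      w a q - w a q' = α * (q - q'))
    -- the bound on the non-cognitive signal derived from optimality and convexity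
    (hbound : ∀ t ∈ Icc tl th, m2 t ≤ m2o) :
    ∀ t ∈ Icc tl th, t < th → m1 t + m2 t = M →
      ∀ t' ∈ Icc tl th, t < t' → m1 t' + m2 t' = M := by

  intro t ht htlt hbind t' ht' htt'
  by_contra hne
  obtain ⟨hf1, hf2, hf3⟩ := hfeas t ht
  obtain ⟨hf1', hf2', hf3'⟩ := hfeas t' ht'
  have h1 := hopt t ht (m1 t') (m2 t') hf1' hf2' hf3'
  have h2 := hopt t' ht' (m1 t) (m2 t) hf1 hf2 hf3
  have hmono : m1 t ≤ m1 t' := by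
    by_contra hlt
    push_neg at hlt
    have := hsc (m1 t) (m1 t') t' t hlt hf1' ht' ht htt'
    linarith
  have hlt : m1 t' + m2 t' < M := lt_of_le_of_ne hf3' hne
  set x := m2 t' with hxdef
  have hx0 : 0 ≤ x := hf2'
  have hxlt : x < m2o := by
    have h3 : m2 t ≤ m2o := hbound t ht
    linarith
  have hy0 : 0 ≤ m2o := le_of_lt hm2o.1
  have hδ : 0 < M - m1 t' - x := by linarith
  have hs0 : 0 < m2o - x := by linarith
  set μ := min ((M - m1 t' - x) / (2 * (m2o - x))) (1 / 2) with hμdef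
  have hμ0 : 0 < μ := lt_min (by positivity) (by norm_num)
  have hμ1 : μ < 1 := lt_of_le_of_lt (min_le_right _ _) (by norm_num)
  set q := (1 - μ) * x + μ * m2o with hqdef
  have hq0 : 0 ≤ q := by nlinarith
  have hμs : μ * (m2o - x) ≤ (M - m1 t' - x) / 2 := by
    have hle := min_le_left ((M - m1 t' - x) / (2 * (m2o - x))) (1 / 2)
    have : μ * (m2o - x) ≤ (M - m1 t' - x) / (2 * (m2o - x)) * (m2o - x) := by
      nlinarith
    calc μ * (m2o - x) ≤ (M - m1 t' - x) / (2 * (m2o - x)) * (m2o - x) := this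
      _ = (M - m1 t' - x) / 2 := by field_simp
  have hqM : m1 t' + q < M := by
    have : q = x + μ * (m2o - x) := by ring
    nlinarith
  have hh : h ((1 - μ) * x + μ * m2o) < (1 - μ) * h x + μ * h m2o := by
    have := hconv.2 (mem_Ici.mpr hx0) (mem_Ici.mpr hy0) (ne_of_lt hxlt)
      (by linarith : (0:ℝ) < 1 - μ) hμ0 (by ring)
    simpa [smul_eq_mul] using this
  have hgx : α * x - h x < α * m2o - h m2o := hmax x hx0 (ne_of_lt hxlt)
  have hgq : α * x - h x < α * q - h q := by nlinarith
  have hw := hreas (m1 t') q x hf1' hq0 hqM hx0 hlt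
  have hdev := hopt t' ht' (m1 t') q hf1' hq0 (le_of_lt hqM)
  linarith
end

section
/- Lemma 1(b): Suppose sender optimality holds for a reasonable wage function ŵ : C → ℝ, and suppose m̂₂(t) ≤ m₂° for all t ∈ T. Then for any pair of types t, t' ∈ T with t < t' such that m̂₁(t) + m̂₂(t) < M and m̂₁(t') + m̂₂(t') < M, one has m̂₁(t) + m̂₂(t) ≤ m̂₁(t') + m̂₂(t'). -/
open Set

/-- Lemma 1(b): among types with slack resource constraint, the total signal is
nondecreasing in type. -/
theorem total_signal_monotone_on_slack
    (tl th M α m2o : ℝ) (c : ℝ → ℝ → ℝ) (h : ℝ → ℝ)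
    (m1 m2 : ℝ → ℝ) (w : ℝ → ℝ → ℝ)
    (htl : 0 < tl) (htlth : tl < th) (hM : 0 < M) (hα : 0 ≤ α)
    -- strict single crossing property of c
    (hsc : ∀ a a' t t', a > a' → 0 ≤ a' → t ∈ Icc tl th → t' ∈ Icc tl th → t > t' →
      c a t + c a' t' < c a t' + c a' t)
    -- strict convexity of h
    (hconv : StrictConvexOn ℝ (Ici 0) h)
    -- m2o is the unique maximizer of m ↦ α⬝m − h m over ℝ≥0, with 0 < m2o < M
    (hm2o : 0 < m2o ∧ m2o < M)
    (hmax : ∀ m, 0 ≤ m → m ≠ m2o → α * m - h m < α * m2o - h m2o)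
    -- feasibility of the strategies
    (hfeas : ∀ t ∈ Icc tl th, 0 ≤ m1 t ∧ 0 ≤ m2 t ∧ m1 t + m2 t ≤ M)
    -- sender optimality
    (hopt : ∀ t ∈ Icc tl th, ∀ p q : ℝ, 0 ≤ p → 0 ≤ q → p + q ≤ M →
      w p q - h q - c p t ≤ w (m1 t) (m2 t) - h (m2 t) - c (m1 t) t)
    -- the wage function is reasonable
    (hreas : ∀ a q q' : ℝ, 0 ≤ a → 0 ≤ q → a + q < M → 0 ≤ q' → a + q' < M →
      w a q - w a q' = α * (q - q'))
    -- the bound on the non-cognitive signal derived from optimality and convexity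
    (hbound : ∀ t ∈ Icc tl th, m2 t ≤ m2o) :
    ∀ t ∈ Icc tl th, ∀ t' ∈ Icc tl th, t < t' →
      m1 t + m2 t < M → m1 t' + m2 t' < M →
      m1 t + m2 t ≤ m1 t' + m2 t' := by
  -- auxiliary: α·q − h q > α·m − h m for 0 ≤ m < q ≤ m2o
  have hmono : ∀ m q : ℝ, 0 ≤ m → m < q → q ≤ m2o → α * m - h m < α * q - h q := by
    intro m q hm hmq hqo
    rcases eq_or_lt_of_le hqo with heq | hlt
    · subst heq; exact hmax m hm (ne_of_lt hmq)
    · -- q strictly between m and m2o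
      set l : ℝ := (m2o - q) / (m2o - m) with hl
      have hden : 0 < m2o - m := by linarith
      have hl0 : 0 < l := div_pos (by linarith) hden
      have hl1 : l < 1 := (div_lt_one hden).2 (by linarith)
      have hlval : l * (m2o - m) = m2o - q := div_mul_cancel₀ _ (ne_of_gt hden)
      have hcomb : l * m + (1 - l) * m2o = q := by linear_combination -hlval
      have H := hconv.2
      have hconvq := H (x := m) (y := m2o) (a := l) (b := 1 - l) (by exact hm)
        (le_of_lt hm2o.1) (by intro hxy; linarith) hl0 (by linarith) (by ring)
      rw [smul_eq_mul, smul_eq_mul, smul_eq_mul, smul_eq_mul, hcomb] at hconvq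
      have hmm : α * m - h m < α * m2o - h m2o := hmax m hm (by intro hx; subst hx; linarith)
      nlinarith [hconvq, hmm, hl0, hl1]
  -- key: slack implies m2 = m2o
  have key : ∀ s ∈ Icc tl th, m1 s + m2 s < M → m2 s = m2o := by
    intro s hs hslack
    by_contra hne
    obtain ⟨h1s, h2s, h3s⟩ := hfeas s hs
    have hlt : m2 s < m2o := lt_of_le_of_ne (hbound s hs) hne
    set q' : ℝ := min m2o ((m2 s + (M - m1 s)) / 2) with hq'
    have hq1 : m2 s < q' := lt_min hlt (by linarith [hslack])
    have hq2 : q' ≤ m2o := min_le_left _ _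
    have hq3 : m1 s + q' < M := by
      have : q' ≤ (m2 s + (M - m1 s)) / 2 := min_le_right _ _
      linarith
    have hq0 : 0 ≤ q' := le_trans h2s (le_of_lt hq1)
    have hgain : α * (m2 s) - h (m2 s) < α * q' - h q' := hmono _ _ h2s hq1 hq2
    have hoptq := hopt s hs (m1 s) q' h1s hq0 (le_of_lt hq3)
    have hw := hreas (m1 s) q' (m2 s) h1s hq0 hq3 h2s hslack
    linarith
  intro t ht t' ht' htt' hslt hslt'
  have h2t := key t ht hslt
  have h2t' := key t' ht' hslt'
  by_contra hcon
  push_neg at hcon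
  have hm1 : m1 t' < m1 t := by linarith [h2t, h2t']
  obtain ⟨h1t, _, _⟩ := hfeas t ht
  obtain ⟨h1t', _, _⟩ := hfeas t' ht'
  have hA := hopt t ht (m1 t') m2o h1t' (le_of_lt hm2o.1)
    (by rw [← h2t']; linarith)
  have hB := hopt t' ht' (m1 t) m2o h1t (le_of_lt hm2o.1)
    (by rw [← h2t]; linarith)
  rw [h2t] at hA
  rw [h2t'] at hB
  have hscc := hsc (m1 t) (m1 t') t' t hm1 h1t' ht' ht htt'
  linarith
end

section
/- Theorem 1 (monotone equilibrium): Suppose sender optimality holds for a reasonable wage function ŵ : C → ℝ, and suppose m̂₂(t) ≤ m₂° for all t ∈ T. Then the equilibrium is monotone: m̂₁ is nondecreasing on T, m̂₂ is nonincreasing on T, and the total signal t ↦ m̂₁(t) + m̂₂(t) is nondecreasing on T. -/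
open Set

/-! Comparing the optimality conditions of two types, each against the other's choice, shows
through strict single crossing that the cognitive signal `m1` cannot decrease. For a fixed `m1`,
a reasonable wage makes the payoff of `m2` equal to the concave function `α m − h m` up to a
constant, as long as the budget is slack; this function increases up to its maximiser `m2o`, so an
optimal `m2` is pushed up to `min m2o (M − m1)`. Both remaining claims follow from this formula. -/

theorem ConcaveOn.left_lt_of_left_lt_right {𝕜 E β : Type*} [Semiring 𝕜] [PartialOrder 𝕜]
    [AddCommMonoid E] [Module 𝕜 E] [AddCommMonoid β] [LinearOrder β] [IsOrderedCancelAddMonoid β]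
    [Module 𝕜 β] [PosSMulStrictMono 𝕜 β] {s : Set E} {f : E → β} (hf : ConcaveOn 𝕜 s f)
    {x y z : E} (hx : x ∈ s) (hy : y ∈ s) (hz : z ∈ openSegment 𝕜 x y) (hxy : f x < f y) :
    f x < f z := by
  rcases lt_or_ge (f z) (f y) with hzy | hyz
  · exact hf.left_lt_of_lt_right hx hy hz hzy
  · exact hxy.trans_le hyz

theorem ConcaveOn.strictMonoOn_inter_Iic {s : Set ℝ} {f : ℝ → ℝ} {m : ℝ}
    (hf : ConcaveOn ℝ s f) (hm : m ∈ s) (hmax : ∀ x ∈ s, x < m → f x < f m) :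
    StrictMonoOn f (s ∩ Iic m) := by
  rintro x ⟨hx, -⟩ y ⟨-, hym : y ≤ m⟩ hxy
  rcases hym.lt_or_eq with hym | rfl
  · have hy : y ∈ openSegment ℝ x m := by
      rw [openSegment_eq_Ioo (hxy.trans hym)]
      exact ⟨hxy, hym⟩
    exact hf.left_lt_of_left_lt_right hx hm hy (hmax x hx (hxy.trans hym))
  · exact hmax x hx hxy

theorem le_of_optimal_of_strictSingleCrossing {c : ℝ → ℝ → ℝ} {S : Set ℝ}
    (hsc : ∀ a a' t t', a > a' → 0 ≤ a' → t ∈ S → t' ∈ S → t > t' →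
      c a t + c a' t' < c a t' + c a' t)
    {a a' v v' t t' : ℝ} (ha' : 0 ≤ a') (ht : t ∈ S) (ht' : t' ∈ S) (htt' : t < t')
    (hopt : v' - c a' t ≤ v - c a t) (hopt' : v - c a t' ≤ v' - c a' t') : a ≤ a' := by
  by_contra! haa'
  linarith [hsc a a' t' t haa' ha' ht' ht htt']

theorem eq_min_of_forall_le {φ g : ℝ → ℝ} {q m₀ B : ℝ} (hq : 0 ≤ q) (hqm : q ≤ m₀)
    (hqB : q ≤ B) (hg : StrictMonoOn g (Icc 0 m₀))
    (hφ : ∀ x y, 0 ≤ x → x < B → 0 ≤ y → y < B → φ x - φ y = g x - g y)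
    (hmax : ∀ x, 0 ≤ x → x ≤ B → φ x ≤ φ q) : q = min m₀ B := by
  by_contra hne
  have hlt : q < min m₀ B := (le_min hqm hqB).lt_of_ne hne
  have hqm' : q < m₀ := hlt.trans_le (min_le_left _ _)
  have hqB' : q < B := hlt.trans_le (min_le_right _ _)
  set q' := min m₀ ((q + B) / 2)
  have hqq' : q < q' := lt_min hqm' (by linarith)
  have hq'B : q' < B := (min_le_right _ _).trans_lt (by linarith)
  have hgain : g q < g q' := hg ⟨hq, hqm⟩ ⟨hq.trans hqq'.le, min_le_left _ _⟩ hqq'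
  linarith [hφ q' q (hq.trans hqq'.le) hq'B hq hqB', hmax q' (hq.trans hqq'.le) hq'B.le]

theorem equilibrium_is_monotone_general
    (tl th M α m2o : ℝ) (c : ℝ → ℝ → ℝ) (h : ℝ → ℝ)
    (m1 m2 : ℝ → ℝ) (w : ℝ → ℝ → ℝ)
    -- strict single crossing property of c
    (hsc : ∀ a a' t t', a > a' → 0 ≤ a' → t ∈ Icc tl th → t' ∈ Icc tl th → t > t' →
      c a t + c a' t' < c a t' + c a' t)
    -- strict convexity of h
    (hconv : StrictConvexOn ℝ (Ici 0) h)
    -- m2o is the unique maximizer of m ↦ α⬝m − h m over ℝ≥0, with 0 < m2o < M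
    (hm2o : 0 < m2o ∧ m2o < M)
    (hmax : ∀ m, 0 ≤ m → m ≠ m2o → α * m - h m < α * m2o - h m2o)
    -- feasibility of the strategies
    (hfeas : ∀ t ∈ Icc tl th, 0 ≤ m1 t ∧ 0 ≤ m2 t ∧ m1 t + m2 t ≤ M)
    -- sender optimality
    (hopt : ∀ t ∈ Icc tl th, ∀ p q : ℝ, 0 ≤ p → 0 ≤ q → p + q ≤ M →
      w p q - h q - c p t ≤ w (m1 t) (m2 t) - h (m2 t) - c (m1 t) t)
    -- the wage function is reasonable
    (hreas : ∀ a q q' : ℝ, 0 ≤ a → 0 ≤ q → a + q < M → 0 ≤ q' → a + q' < M →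
      w a q - w a q' = α * (q - q'))
    -- the bound on the non-cognitive signal derived from optimality and convexity
    (hbound : ∀ t ∈ Icc tl th, m2 t ≤ m2o) :
    (∀ t ∈ Icc tl th, ∀ t' ∈ Icc tl th, t < t' → m1 t ≤ m1 t') ∧
    (∀ t ∈ Icc tl th, ∀ t' ∈ Icc tl th, t < t' → m2 t' ≤ m2 t) ∧
    (∀ t ∈ Icc tl th, ∀ t' ∈ Icc tl th, t < t' → m1 t + m2 t ≤ m1 t' + m2 t') := by
  have hm1 : ∀ t ∈ Icc tl th, ∀ t' ∈ Icc tl th, t < t' → m1 t ≤ m1 t' :=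
    fun t ht t' ht' htt' ↦ by
      obtain ⟨ha, hq, haq⟩ := hfeas t ht
      obtain ⟨ha', hq', haq'⟩ := hfeas t' ht'
      exact le_of_optimal_of_strictSingleCrossing hsc ha' ht ht' htt'
        (hopt t ht _ _ ha' hq' haq') (hopt t' ht' _ _ ha hq haq)
  have hg : StrictMonoOn (fun m ↦ α * m - h m) (Icc 0 m2o) := by
    rw [← Ici_inter_Iic]
    have hconc : ConcaveOn ℝ (Ici 0) (fun m ↦ α * m - h m) :=
      ((LinearMap.mul ℝ ℝ α).concaveOn (convex_Ici 0)).sub hconv.convexOn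
    exact hconc.strictMonoOn_inter_Iic hm2o.1.le fun x hx hxm ↦ hmax x hx hxm.ne
  have hm2 : ∀ t ∈ Icc tl th, m2 t = min m2o (M - m1 t) := fun t ht ↦ by
    obtain ⟨ha, hq, haq⟩ := hfeas t ht
    refine eq_min_of_forall_le (φ := fun q ↦ w (m1 t) q - h q) hq (hbound t ht) (by linarith)
      hg (fun x y hx hxB hy hyB ↦ ?_) fun x hx hxB ↦ ?_
    · linarith [hreas (m1 t) x y ha hx (by linarith) hy (by linarith)]
    · linarith [hopt t ht (m1 t) x ha hx (by linarith)]
  refine ⟨hm1, fun t ht t' ht' htt' ↦ ?_, fun t ht t' ht' htt' ↦ ?_⟩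
  · rw [hm2 t ht, hm2 t' ht']
    exact min_le_min le_rfl (sub_le_sub_left (hm1 t ht t' ht' htt') M)
  · rw [hm2 t ht, hm2 t' ht', ← min_add_add_left, ← min_add_add_left, add_sub_cancel,
      add_sub_cancel]
    exact min_le_min (by linarith [hm1 t ht t' ht' htt']) le_rfl

/-- Theorem 1 (monotone equilibrium): under sender optimality for a reasonable wage
function, `m1` is nondecreasing, `m2` is nonincreasing, and `m1 + m2` is nondecreasing. -/
theorem equilibrium_is_monotone
    (tl th M α m2o : ℝ) (c : ℝ → ℝ → ℝ) (h : ℝ → ℝ)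
    (m1 m2 : ℝ → ℝ) (w : ℝ → ℝ → ℝ)
    (htl : 0 < tl) (htlth : tl < th) (hM : 0 < M) (hα : 0 ≤ α)
    -- strict single crossing property of c
    (hsc : ∀ a a' t t', a > a' → 0 ≤ a' → t ∈ Icc tl th → t' ∈ Icc tl th → t > t' →
      c a t + c a' t' < c a t' + c a' t)
    -- strict convexity of h
    (hconv : StrictConvexOn ℝ (Ici 0) h)
    -- m2o is the unique maximizer of m ↦ α⬝m − h m over ℝ≥0, with 0 < m2o < M
    (hm2o : 0 < m2o ∧ m2o < M)
    (hmax : ∀ m, 0 ≤ m → m ≠ m2o → α * m - h m < α * m2o - h m2o)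
    -- feasibility of the strategies
    (hfeas : ∀ t ∈ Icc tl th, 0 ≤ m1 t ∧ 0 ≤ m2 t ∧ m1 t + m2 t ≤ M)
    -- sender optimality
    (hopt : ∀ t ∈ Icc tl th, ∀ p q : ℝ, 0 ≤ p → 0 ≤ q → p + q ≤ M →
      w p q - h q - c p t ≤ w (m1 t) (m2 t) - h (m2 t) - c (m1 t) t)
    -- the wage function is reasonable
    (hreas : ∀ a q q' : ℝ, 0 ≤ a → 0 ≤ q → a + q < M → 0 ≤ q' → a + q' < M →
      w a q - w a q' = α * (q - q'))
    -- the bound on the non-cognitive signal derived from optimality and convexity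
    (hbound : ∀ t ∈ Icc tl th, m2 t ≤ m2o) :
    (∀ t ∈ Icc tl th, ∀ t' ∈ Icc tl th, t < t' → m1 t ≤ m1 t') ∧
    (∀ t ∈ Icc tl th, ∀ t' ∈ Icc tl th, t < t' → m2 t' ≤ m2 t) ∧
    (∀ t ∈ Icc tl th, ∀ t' ∈ Icc tl th, t < t' → m1 t + m2 t ≤ m1 t' + m2 t') :=
  equilibrium_is_monotone_general tl th M α m2o c h m1 m2 w hsc hconv hm2o hmax hfeas hopt hreas
    hbound
end

section
/- Off-path deviation lemma at the bottom (the inequality content of the appendix lemma showing that Criterion D1 puts all weight on the lowest type for deviations below the lowest equilibrium cognitive signal): Suppose sender optimality holds for some wage function ŵ : C → ℝ. Let (m₁', m₂') ∈ C with m₁' < m̂₁(t̲) and let w' ∈ ℝ. If w' − c(m₁', t̲) − h(m₂') ≤ U(t̲), then for every t ∈ T with t > t̲ one has w' − c(m₁', t) − h(m₂') < U(t). -/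
open Set

/-- Off-path deviation lemma at the bottom: if the lowest type weakly loses from a
deviation to a cognitive signal below her equilibrium signal, every higher type
strictly loses from it. Here `U t = w (m1 t) (m2 t) - h (m2 t) - c (m1 t) t`. -/
theorem offpath_bottom_D1
    (tl th M α m2o : ℝ) (c : ℝ → ℝ → ℝ) (h : ℝ → ℝ)
    (m1 m2 : ℝ → ℝ) (w : ℝ → ℝ → ℝ)
    (htl : 0 < tl) (htlth : tl < th) (hM : 0 < M) (hα : 0 ≤ α)
    -- strict single crossing property of c
    (hsc : ∀ a a' t t', a > a' → 0 ≤ a' → t ∈ Icc tl th → t' ∈ Icc tl th → t > t' →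
      c a t + c a' t' < c a t' + c a' t)
    -- strict convexity of h
    (hconv : StrictConvexOn ℝ (Ici 0) h)
    -- m2o is the unique maximizer of m ↦ α⬝m − h m over ℝ≥0, with 0 < m2o < M
    (hm2o : 0 < m2o ∧ m2o < M)
    (hmax : ∀ m, 0 ≤ m → m ≠ m2o → α * m - h m < α * m2o - h m2o)
    -- feasibility of the strategies
    (hfeas : ∀ t ∈ Icc tl th, 0 ≤ m1 t ∧ 0 ≤ m2 t ∧ m1 t + m2 t ≤ M)
    -- sender optimality
    (hopt : ∀ t ∈ Icc tl th, ∀ p q : ℝ, 0 ≤ p → 0 ≤ q → p + q ≤ M →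
      w p q - h q - c p t ≤ w (m1 t) (m2 t) - h (m2 t) - c (m1 t) t)
    -- the off-path deviation
    (m1' m2' w' : ℝ) (hdev : 0 ≤ m1' ∧ 0 ≤ m2' ∧ m1' + m2' ≤ M)
    (hlow : m1' < m1 tl)
    (hweak : w' - c m1' tl - h m2' ≤
      w (m1 tl) (m2 tl) - h (m2 tl) - c (m1 tl) tl) :
    ∀ t ∈ Icc tl th, tl < t →
      w' - c m1' t - h m2' < w (m1 t) (m2 t) - h (m2 t) - c (m1 t) t := by
  intro t ht hlt
  have htl_mem : tl ∈ Icc tl th := ⟨le_refl _, le_of_lt htlth⟩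
  obtain ⟨h1, h2, h3⟩ := hfeas tl htl_mem
  have hopt_t := hopt t ht (m1 tl) (m2 tl) h1 h2 h3
  have hsc' := hsc (m1 tl) m1' t tl hlow hdev.1 ht htl_mem hlt
  linarith
end

section
/- Off-path deviation lemma at the top (the inequality content of the appendix lemma showing that Criterion D1 puts all weight on the highest type for deviations above the highest equilibrium cognitive signal): Suppose sender optimality holds for some wage function ŵ : C → ℝ. Let (m₁', m₂') ∈ C with m₁' > m̂₁(t̄) and let w' ∈ ℝ. If w' − c(m₁', t̄) − h(m₂') ≤ U(t̄), then for every t ∈ T with t < t̄ one has w' − c(m₁', t) − h(m₂') < U(t). -/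
open Set

/-- Off-path deviation lemma at the top: if the highest type weakly loses from a
deviation to a cognitive signal above her equilibrium signal, every lower type
strictly loses from it. Here `U t = w (m1 t) (m2 t) - h (m2 t) - c (m1 t) t`. -/
theorem offpath_top_D1
    (tl th M α m2o : ℝ) (c : ℝ → ℝ → ℝ) (h : ℝ → ℝ)
    (m1 m2 : ℝ → ℝ) (w : ℝ → ℝ → ℝ)
    (htl : 0 < tl) (htlth : tl < th) (hM : 0 < M) (hα : 0 ≤ α)
    -- strict single crossing property of c
    (hsc : ∀ a a' t t', a > a' → 0 ≤ a' → t ∈ Icc tl th → t' ∈ Icc tl th → t > t' →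
      c a t + c a' t' < c a t' + c a' t)
    -- strict convexity of h
    (hconv : StrictConvexOn ℝ (Ici 0) h)
    -- m2o is the unique maximizer of m ↦ α⬝m − h m over ℝ≥0, with 0 < m2o < M
    (hm2o : 0 < m2o ∧ m2o < M)
    (hmax : ∀ m, 0 ≤ m → m ≠ m2o → α * m - h m < α * m2o - h m2o)
    -- feasibility of the strategies
    (hfeas : ∀ t ∈ Icc tl th, 0 ≤ m1 t ∧ 0 ≤ m2 t ∧ m1 t + m2 t ≤ M)
    -- sender optimality
    (hopt : ∀ t ∈ Icc tl th, ∀ p q : ℝ, 0 ≤ p → 0 ≤ q → p + q ≤ M →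
      w p q - h q - c p t ≤ w (m1 t) (m2 t) - h (m2 t) - c (m1 t) t)
    -- the off-path deviation
    (m1' m2' w' : ℝ) (hdev : 0 ≤ m1' ∧ 0 ≤ m2' ∧ m1' + m2' ≤ M)
    (hhigh : m1 th < m1')
    (hweak : w' - c m1' th - h m2' ≤
      w (m1 th) (m2 th) - h (m2 th) - c (m1 th) th) :
    ∀ t ∈ Icc tl th, t < th →
      w' - c m1' t - h m2' < w (m1 t) (m2 t) - h (m2 t) - c (m1 t) t := by
  intro t ht htlt
  have hthm : th ∈ Icc tl th := ⟨le_of_lt htlth, le_refl th⟩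
  obtain ⟨h1, h2, h3⟩ := hfeas th hthm
  -- type t deviating to th's bundle
  have hopt_t := hopt t ht (m1 th) (m2 th) h1 h2 h3
  -- single crossing
  have hsc' := hsc m1' (m1 th) th t hhigh h1 hthm ht htlt
  linarith
end

section
/- Upward-deviation lemma for discontinuity gaps (the inequality content of the appendix lemma showing that Criterion D1 puts all weight on the jump type for deviations inside a discontinuity gap): Suppose sender optimality holds for some wage function ŵ : C → ℝ. Let t, t' ∈ T with t < t', let (m₁', m₂') ∈ C with m₁' > m̂₁(t'), and let w' ∈ ℝ. If w' − c(m₁', t) − h(m₂') ≥ U(t), then w' − c(m₁', t') − h(m₂') > U(t'). -/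
open Set

/-- Upward-deviation lemma for discontinuity gaps: if a lower type weakly gains from a
deviation to a cognitive signal above the equilibrium signal of a higher type, then
the higher type strictly gains from it.
Here `U t = w (m1 t) (m2 t) - h (m2 t) - c (m1 t) t`. -/
theorem offpath_gap_D1
    (tl th M α m2o : ℝ) (c : ℝ → ℝ → ℝ) (h : ℝ → ℝ)
    (m1 m2 : ℝ → ℝ) (w : ℝ → ℝ → ℝ)
    (htl : 0 < tl) (htlth : tl < th) (hM : 0 < M) (hα : 0 ≤ α)
    -- strict single crossing property of c
    (hsc : ∀ a a' t t', a > a' → 0 ≤ a' → t ∈ Icc tl th → t' ∈ Icc tl th → t > t' →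
      c a t + c a' t' < c a t' + c a' t)
    -- strict convexity of h
    (hconv : StrictConvexOn ℝ (Ici 0) h)
    -- m2o is the unique maximizer of m ↦ α⬝m − h m over ℝ≥0, with 0 < m2o < M
    (hm2o : 0 < m2o ∧ m2o < M)
    (hmax : ∀ m, 0 ≤ m → m ≠ m2o → α * m - h m < α * m2o - h m2o)
    -- feasibility of the strategies
    (hfeas : ∀ t ∈ Icc tl th, 0 ≤ m1 t ∧ 0 ≤ m2 t ∧ m1 t + m2 t ≤ M)
    -- sender optimality
    (hopt : ∀ t ∈ Icc tl th, ∀ p q : ℝ, 0 ≤ p → 0 ≤ q → p + q ≤ M →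
      w p q - h q - c p t ≤ w (m1 t) (m2 t) - h (m2 t) - c (m1 t) t)
    -- the two types and the off-path deviation
    (t t' : ℝ) (ht : t ∈ Icc tl th) (ht' : t' ∈ Icc tl th) (htt' : t < t')
    (m1' m2' w' : ℝ) (hdev : 0 ≤ m1' ∧ 0 ≤ m2' ∧ m1' + m2' ≤ M)
    (hhigh : m1 t' < m1')
    (hweak : w' - c m1' t - h m2' ≥
      w (m1 t) (m2 t) - h (m2 t) - c (m1 t) t) :
    w' - c m1' t' - h m2' > w (m1 t') (m2 t') - h (m2 t') - c (m1 t') t' := by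
  obtain ⟨h1, h2, h3⟩ := hfeas t' ht'
  have hopt1 := hopt t ht (m1 t') (m2 t') h1 h2 h3
  have hsc1 := hsc m1' (m1 t') t' t hhigh h1 ht' ht htt'
  linarith
end

section
/- Strict preference of interior pooled types over cognitive deviations (case 1 of the appendix lemma proving that a pooling set is an interval): Suppose sender optimality holds for some wage function ŵ : C → ℝ. Let (m₁, m₂) ∈ C and let t₁, t₂ ∈ T with t₁ < t₂ and (m̂₁(t₁), m̂₂(t₁)) = (m̂₁(t₂), m̂₂(t₂)) = (m₁, m₂). Then for every t' ∈ T with t₁ < t' < t₂ and every (m₁', m₂') ∈ C with m₁' ≠ m₁: ŵ(m₁, m₂) − h(m₂) − c(m₁, t') > ŵ(m₁', m₂') − h(m₂') − c(m₁', t'). -/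
open Set

/-- Strict preference of interior pooled types over cognitive deviations: if two types
`t1 < t2` pool on the same signal pair `(a, b)`, then every type strictly between them
strictly prefers `(a, b)` to any feasible pair with a different cognitive signal. -/
theorem interior_pooled_types_strict_preference
    (tl th M α m2o : ℝ) (c : ℝ → ℝ → ℝ) (h : ℝ → ℝ)
    (m1 m2 : ℝ → ℝ) (w : ℝ → ℝ → ℝ)
    (htl : 0 < tl) (htlth : tl < th) (hM : 0 < M) (hα : 0 ≤ α)
    -- strict single crossing property of c
    (hsc : ∀ a a' t t', a > a' → 0 ≤ a' → t ∈ Icc tl th → t' ∈ Icc tl th → t > t' →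
      c a t + c a' t' < c a t' + c a' t)
    -- strict convexity of h
    (hconv : StrictConvexOn ℝ (Ici 0) h)
    -- m2o is the unique maximizer of m ↦ α⬝m − h m over ℝ≥0, with 0 < m2o < M
    (hm2o : 0 < m2o ∧ m2o < M)
    (hmax : ∀ m, 0 ≤ m → m ≠ m2o → α * m - h m < α * m2o - h m2o)
    -- feasibility of the strategies
    (hfeas : ∀ t ∈ Icc tl th, 0 ≤ m1 t ∧ 0 ≤ m2 t ∧ m1 t + m2 t ≤ M)
    -- sender optimality
    (hopt : ∀ t ∈ Icc tl th, ∀ p q : ℝ, 0 ≤ p → 0 ≤ q → p + q ≤ M →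
      w p q - h q - c p t ≤ w (m1 t) (m2 t) - h (m2 t) - c (m1 t) t)
    -- the pooled pair and the two pooled types
    (a b : ℝ) (habC : 0 ≤ a ∧ 0 ≤ b ∧ a + b ≤ M)
    (t1 t2 : ℝ) (ht1 : t1 ∈ Icc tl th) (ht2 : t2 ∈ Icc tl th) (ht12 : t1 < t2)
    (hpool1 : m1 t1 = a ∧ m2 t1 = b) (hpool2 : m1 t2 = a ∧ m2 t2 = b) :
    ∀ t' ∈ Icc tl th, t1 < t' → t' < t2 →
      ∀ p q : ℝ, 0 ≤ p → 0 ≤ q → p + q ≤ M → p ≠ a →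
        w p q - h q - c p t' < w a b - h b - c a t' := by
  intro t' ht' h1t' ht'2 p q hp hq hpq hpa
  rcases lt_or_gt_of_ne hpa with hlt | hgt
  · -- p < a : use optimality at t1 and single crossing between t' and t1
    have hopt1 := hopt t1 ht1 p q hp hq hpq
    rw [hpool1.1, hpool1.2] at hopt1
    have hsc1 := hsc a p t' t1 hlt hp ht' ht1 h1t'
    linarith
  · -- p > a : use optimality at t2 and single crossing between t2 and t'
    have hopt2 := hopt t2 ht2 p q hp hq hpq
    rw [hpool2.1, hpool2.2] at hopt2
    have hsc2 := hsc p a t2 t' hgt habC.1 ht2 ht' ht'2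
    linarith
end

section
/- Proposition 6 (existence and uniqueness of the high threshold type): Let m₁*, m₂* be a strictly incentive compatible separating profile on [t̲, t'] with t' in the interior of T and m₁*(t') = M. If the lowest type strictly prefers her separating bundle to the pooled bundle, i.e., ℰ(t̲) − c(M, t̲) < u*(t̲), then there exists exactly one t_h ∈ (t̲, t'] such that u*(t_h) = ℰ(t_h) − c(M, t_h). -/
/-!
Consider the gap `D(t) = u*(t) + c(M, t) − ℰ(t)` on `[tl, t']`. For `s < t`, incentive
compatibility of `s` against mimicking `t` gives `u*(t) − u*(s) < c(m₁*(t), s) − c(m₁*(t), t)`,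
and single crossing with `m₁*(t) ≤ M` bounds the right side by `c(M, s) − c(M, t)`; so
`u* + c(M, ·)` is strictly decreasing. `ℰ(t)` is an average of the increasing function `f(M, ·)`
over `[t, th]`, so it increases with `t`. Thus `D` is continuous and strictly decreasing,
`D(tl) > 0` by hypothesis, and at `t'` the bundle is `(M, 0)`, so `D(t') = f(M, t') − ℰ(t') < 0`
because `G` charges `(t', th]`. The intermediate value theorem gives exactly one zero of `D`
in `(tl, t']`.
-/

open Set MeasureTheory

/-- Separating utility `u*(t) = α·m₂*(t) + f(m₁*(t), t) − c(m₁*(t), t) − h(m₂*(t))`. -/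
noncomputable def sepUtil (α : ℝ) (f c : ℝ → ℝ → ℝ) (h : ℝ → ℝ) (m1s m2s : ℝ → ℝ)
    (t : ℝ) : ℝ :=
  α * m2s t + f (m1s t) t - c (m1s t) t - h (m2s t)

/-- Pooled conditional expectation `ℰ(t) = E[f(M, z) | z ≥ t]` under the prior `G`. -/
noncomputable def pooledExp (th M : ℝ) (f : ℝ → ℝ → ℝ) (G : Measure ℝ) (t : ℝ) : ℝ :=
  (∫ z in Set.Icc t th, f M z ∂G) / (G (Set.Icc t th)).toReal

section SetAverage

variable {α : Type*} [MeasurableSpace α] {μ : Measure α} {s : Set α} {g : α → ℝ} {c : ℝ}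

lemma le_setAverage_of_forall_le (hs₀ : μ s ≠ 0) (hs : μ s ≠ ⊤) (hg : IntegrableOn g s μ)
    (hc : ∀ x ∈ s, c ≤ g x) : c ≤ ⨍ x in s, g x ∂μ :=
  let ⟨x, hx, hle⟩ := exists_le_setAverage hs₀ hs hg
  (hc x hx).trans hle

lemma setAverage_le_of_forall_le (hs₀ : μ s ≠ 0) (hs : μ s ≠ ⊤) (hg : IntegrableOn g s μ)
    (hc : ∀ x ∈ s, g x ≤ c) : ⨍ x in s, g x ∂μ ≤ c :=
  let ⟨x, hx, hle⟩ := exists_setAverage_le hs₀ hs hg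
  hle.trans (hc x hx)

lemma lt_setAverage_of_forall_lt (hs₀ : μ s ≠ 0) (hs : μ s ≠ ⊤) (hg : IntegrableOn g s μ)
    (hc : ∀ x ∈ s, c < g x) : c < ⨍ x in s, g x ∂μ :=
  let ⟨x, hx, hle⟩ := exists_le_setAverage hs₀ hs hg
  (hc x hx).trans_le hle

end SetAverage

section UpperInterval

variable {μ : Measure ℝ} {g : ℝ → ℝ} {a b s t : ℝ}

lemma setAverage_Icc_mono_left [IsFiniteMeasure μ] (hg : MonotoneOn g (Icc s b))
    (hint : IntegrableOn g (Icc s b) μ) (hst : s ≤ t) (htb : t ≤ b) (ht : μ (Icc t b) ≠ 0) :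
    ⨍ x in Icc s b, g x ∂μ ≤ ⨍ x in Icc t b, g x ∂μ := by
  have hsplit : Ico s t ∪ Icc t b = Icc s b := Ico_union_Icc_eq_Icc hst htb
  rw [← hsplit]
  by_cases hnull : μ (Ico s t) = 0
  -- the average over the null piece is a junk value, but then the two averages agree
  · have hae : (Ico s t ∪ Icc t b : Set ℝ) =ᵐ[μ] (Icc t b : Set ℝ) := by
      simpa using (ae_eq_empty.2 hnull).union (Filter.EventuallyEq.refl (ae μ) (Icc t b))
    exact (setAverage_congr hae).le
  have hlow : ⨍ x in Ico s t, g x ∂μ ≤ g t :=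
    setAverage_le_of_forall_le hnull (measure_ne_top _ _)
      (hint.mono_set (hsplit ▸ subset_union_left))
      fun x hx => hg ⟨hx.1, hx.2.le.trans htb⟩ ⟨hst, htb⟩ hx.2.le
  have hhigh : g t ≤ ⨍ x in Icc t b, g x ∂μ :=
    le_setAverage_of_forall_le ht (measure_ne_top _ _)
      (hint.mono_set (hsplit ▸ subset_union_right))
      fun x hx => hg ⟨hst, htb⟩ ⟨hst.trans hx.1, hx.2⟩ hx.1
  have hdisj : Disjoint (Ico s t) (Icc t b) :=
    (Iio_disjoint_Ici le_rfl).mono Ico_subset_Iio_self Icc_subset_Ici_self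
  have hseg := average_union_mem_segment (μ := μ) (f := g) hdisj.aedisjoint
    measurableSet_Icc.nullMeasurableSet (measure_ne_top _ _) (measure_ne_top _ _)
    (hint.mono_set (hsplit ▸ subset_union_left)) (hint.mono_set (hsplit ▸ subset_union_right))
  exact (segment_subset_Icc (hlow.trans hhigh) hseg).2

lemma continuousOn_setIntegral_Icc_left [NullSingletonClass μ]
    (hint : IntegrableOn g (Icc a b) μ) :
    ContinuousOn (fun t => ∫ x in Icc t b, g x ∂μ) (Icc a b) := by
  rcases lt_or_ge b a with hba | hab
  · simp [Icc_eq_empty_of_lt hba]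
  have hprim := intervalIntegral.continuousOn_primitive_interval_left (uIcc_of_le hab ▸ hint)
  rw [uIcc_of_le hab] at hprim
  refine hprim.congr fun t ht => ?_
  rw [integral_Icc_eq_integral_Ioc]
  exact (intervalIntegral.integral_of_le ht.2).symm

lemma continuousOn_setAverage_Icc_left [IsFiniteMeasure μ] [NullSingletonClass μ]
    (hint : IntegrableOn g (Icc a b) μ) (htb : t ≤ b) (ht : μ (Icc t b) ≠ 0) :
    ContinuousOn (fun s => ⨍ x in Icc s b, g x ∂μ) (Icc a t) := by
  have hsub : Icc a t ⊆ Icc a b := Icc_subset_Icc_right htb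
  have hmass : ContinuousOn (fun s => μ.real (Icc s b)) (Icc a t) := by
    refine ((continuousOn_setIntegral_Icc_left (g := fun _ => (1 : ℝ))
      (integrableOn_const (measure_ne_top μ _))).mono hsub).congr fun s _ => ?_
    simp only [setIntegral_const, smul_eq_mul, mul_one]
  have hmass_ne : ∀ s ∈ Icc a t, μ.real (Icc s b) ≠ 0 := fun s hs =>
    (ENNReal.toReal_pos (fun h0 => ht (measure_mono_null (Icc_subset_Icc_left hs.2) h0))
      (measure_ne_top _ _)).ne'
  simp only [setAverage_eq, smul_eq_mul]
  exact (hmass.inv₀ hmass_ne).mul ((continuousOn_setIntegral_Icc_left hint).mono hsub)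

end UpperInterval

lemma existsUnique_mem_Ioc_eq_zero_of_strictAntiOn {D : ℝ → ℝ} {a b : ℝ} (hab : a ≤ b)
    (hD : ContinuousOn D (Icc a b)) (hanti : StrictAntiOn D (Icc a b)) (ha : 0 < D a)
    (hb : D b ≤ 0) : ∃! x, x ∈ Ioc a b ∧ D x = 0 := by
  obtain ⟨x, hx, hx0⟩ := intermediate_value_Icc' hab hD ⟨hb, ha.le⟩
  have hxa : a ≠ x := by rintro rfl; exact ha.ne' hx0
  refine ⟨x, ⟨⟨lt_of_le_of_ne hx.1 hxa, hx.2⟩, hx0⟩, fun y ⟨hy, hy0⟩ => ?_⟩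
  exact hanti.injOn (Ioc_subset_Icc_self hy) hx (hy0.trans hx0.symm)

lemma strictAntiOn_sepUtil_add_cost {α M : ℝ} {f c : ℝ → ℝ → ℝ} {h : ℝ → ℝ}
    {m1s m2s : ℝ → ℝ} {S : Set ℝ}
    (hsc : ∀ a a' t t', a > a' → 0 ≤ a' → t ∈ S → t' ∈ S → t > t' →
      c a t + c a' t' < c a t' + c a' t)
    (hm1 : ∀ t ∈ S, 0 ≤ m1s t ∧ m1s t ≤ M)
    (hIC : ∀ t ∈ S, ∀ s ∈ S, t ≠ s →
      sepUtil α f c h m1s m2s t > α * m2s s + f (m1s s) s - c (m1s s) t - h (m2s s)) :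
    StrictAntiOn (fun t => sepUtil α f c h m1s m2s t + c M t) S := by
  intro s hs t ht hst
  have hmimic := hIC s hs t ht hst.ne
  have hcross : c (m1s t) s - c (m1s t) t ≤ c M s - c M t := by
    rcases (hm1 t ht).2.eq_or_lt with heq | hlt
    · rw [heq]
    · linarith [hsc M (m1s t) t s hlt (hm1 t ht).1 ht hs hst]
  unfold sepUtil at hmimic ⊢
  linarith

section PooledExp

variable {th M a b : ℝ} {f : ℝ → ℝ → ℝ} {G : Measure ℝ}

lemma pooledExp_eq_setAverage (t : ℝ) :
    pooledExp th M f G t = ⨍ z in Icc t th, f M z ∂G := by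
  rw [pooledExp, setAverage_eq, smul_eq_mul, measureReal_def, div_eq_inv_mul]

lemma monotoneOn_pooledExp [IsFiniteMeasure G] (hf : MonotoneOn (f M) (Icc a th))
    (hint : IntegrableOn (f M) (Icc a th) G) (hb : b ≤ th) (hmass : G (Icc b th) ≠ 0) :
    MonotoneOn (pooledExp th M f G) (Icc a b) := fun s hs t ht hst => by
  simp only [pooledExp_eq_setAverage]
  exact setAverage_Icc_mono_left (hf.mono (Icc_subset_Icc_left hs.1))
    (hint.mono_set (Icc_subset_Icc_left hs.1)) hst (ht.2.trans hb)
    fun h0 => hmass (measure_mono_null (Icc_subset_Icc_left ht.2) h0)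

lemma continuousOn_pooledExp [IsFiniteMeasure G] [NullSingletonClass G]
    (hint : IntegrableOn (f M) (Icc a th) G) (hb : b ≤ th) (hmass : G (Icc b th) ≠ 0) :
    ContinuousOn (pooledExp th M f G) (Icc a b) := by
  simpa only [← pooledExp_eq_setAverage] using continuousOn_setAverage_Icc_left hint hb hmass

lemma lt_pooledExp [IsFiniteMeasure G] [NullSingletonClass G] (hf : StrictMonoOn (f M) (Icc b th))
    (hint : IntegrableOn (f M) (Icc b th) G) (hmass : G (Ioc b th) ≠ 0) :
    f M b < pooledExp th M f G b := by
  obtain ⟨z, hbz, hzth⟩ := nonempty_of_measure_ne_zero hmass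
  rw [pooledExp_eq_setAverage, ← setAverage_congr Ioc_ae_eq_Icc]
  exact lt_setAverage_of_forall_lt hmass (measure_ne_top _ _) (hint.mono_set Ioc_subset_Icc_self)
    fun x hx => hf ⟨le_rfl, hbz.le.trans hzth⟩ (Ioc_subset_Icc_self hx) hx.1

end PooledExp

lemma continuousOn_sepUtil {α : ℝ} {f c : ℝ → ℝ → ℝ} {h : ℝ → ℝ} {m1s m2s : ℝ → ℝ}
    {S : Set ℝ} (hf : Continuous fun p : ℝ × ℝ => f p.1 p.2)
    (hc : Continuous fun p : ℝ × ℝ => c p.1 p.2) (hh : Continuous h)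
    (hm1 : ContinuousOn m1s S) (hm2 : ContinuousOn m2s S) :
    ContinuousOn (sepUtil α f c h m1s m2s) S :=
  (((continuousOn_const.mul hm2).add (hf.comp_continuousOn (hm1.prodMk continuousOn_id))).sub
    (hc.comp_continuousOn (hm1.prodMk continuousOn_id))).sub (hh.comp_continuousOn hm2)

theorem high_threshold_exists_unique_general
    (tl th M α : ℝ) (f c : ℝ → ℝ → ℝ) (h : ℝ → ℝ) (G : Measure ℝ)
    (t' : ℝ) (m1s m2s : ℝ → ℝ)
    (hM : 0 < M)
    -- the prior: an atomless Borel probability measure with full support on [tl, th]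
    (hG_prob : IsProbabilityMeasure G)
    (hG_atomless : ∀ x : ℝ, G {x} = 0)
    (hG_full : ∀ s : Set ℝ, IsOpen s → (s ∩ Icc tl th).Nonempty → 0 < G s)
    -- f is continuous and strictly increasing in t
    (hf_cont : Continuous fun p : ℝ × ℝ => f p.1 p.2)
    (hf_inc : ∀ a : ℝ, 0 ≤ a → StrictMonoOn (fun t => f a t) (Icc tl th))
    -- c is continuous and satisfies the strict single crossing property
    (hc_cont : Continuous fun p : ℝ × ℝ => c p.1 p.2)
    (hsc : ∀ a a' t t', a > a' → 0 ≤ a' → t ∈ Icc tl th → t' ∈ Icc tl th → t > t' →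
      c a t + c a' t' < c a t' + c a' t)
    -- h is continuous with h 0 = 0
    (hh_cont : Continuous h) (hh0 : h 0 = 0)
    -- t' is interior, and m1s, m2s form a separating profile on [tl, t']
    (ht' : t' ∈ Ioo tl th)
    (hm1_cont : ContinuousOn m1s (Icc tl t')) (hm2_cont : ContinuousOn m2s (Icc tl t'))
    (hfeas : ∀ t ∈ Icc tl t', 0 ≤ m1s t ∧ 0 ≤ m2s t ∧ m1s t + m2s t ≤ M)
    (htop1 : m1s t' = M) (htop2 : m2s t' = 0)
    -- strict incentive compatibility of the separating profile
    (hIC : ∀ t ∈ Icc tl t', ∀ s ∈ Icc tl t', t ≠ s →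
      sepUtil α f c h m1s m2s t >
        α * m2s s + f (m1s s) s - c (m1s s) t - h (m2s s))
    -- the lowest type strictly prefers her separating bundle to the pooled bundle
    (hlow : pooledExp th M f G tl - c M tl < sepUtil α f c h m1s m2s tl) :
    ∃! t_h : ℝ, t_h ∈ Ioc tl t' ∧
      sepUtil α f c h m1s m2s t_h = pooledExp th M f G t_h - c M t_h := by
  have : NullSingletonClass G := ⟨hG_atomless⟩
  obtain ⟨htlt', ht'th⟩ := ht'
  have hfM := hf_inc M hM.le
  have hint : IntegrableOn (f M) (Icc tl th) G :=
    (hf_cont.comp (continuous_const.prodMk continuous_id)).continuousOn.integrableOn_compact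
      isCompact_Icc
  have hupper : G (Ioc t' th) ≠ 0 := ((hG_full _ isOpen_Ioo
    ⟨(t' + th) / 2, ⟨by linarith, by linarith⟩, by linarith, by linarith⟩).trans_le
    (measure_mono Ioo_subset_Ioc_self)).ne'
  have hmass : G (Icc t' th) ≠ 0 := fun h0 => hupper (measure_mono_null Ioc_subset_Icc_self h0)
  have hE_top : f M t' < pooledExp th M f G t' := lt_pooledExp
    (hfM.mono (Icc_subset_Icc_left htlt'.le)) (hint.mono_set (Icc_subset_Icc_left htlt'.le)) hupper
  have hu_top : sepUtil α f c h m1s m2s t' = f M t' - c M t' := by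
    simp [sepUtil, htop1, htop2, hh0]
  have hanti := strictAntiOn_sepUtil_add_cost (M := M)
    (fun a a' t s ha ha' ht hs => hsc a a' t s ha ha' ⟨ht.1, ht.2.trans ht'th.le⟩
      ⟨hs.1, hs.2.trans ht'th.le⟩)
    (fun t ht => ⟨(hfeas t ht).1, by linarith [hfeas t ht]⟩) hIC
  obtain ⟨x, ⟨hx, hx0⟩, huniq⟩ := existsUnique_mem_Ioc_eq_zero_of_strictAntiOn
    (D := fun t => sepUtil α f c h m1s m2s t + c M t + -pooledExp th M f G t) htlt'.le
    (((continuousOn_sepUtil hf_cont hc_cont hh_cont hm1_cont hm2_cont).add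
      (hc_cont.comp (continuous_const.prodMk continuous_id)).continuousOn).add
      (continuousOn_pooledExp hint ht'th.le hmass).neg)
    (hanti.add_antitone (monotoneOn_pooledExp hfM.monotoneOn hint ht'th.le hmass).neg)
    (by linarith) (by linarith)
  exact ⟨x, ⟨hx, by linarith⟩, fun y ⟨hy, hy0⟩ => huniq y ⟨hy, by linarith⟩⟩

/-- Proposition 6 (existence and uniqueness of the high threshold type): given a strictly
incentive compatible separating profile on `[tl, t']` with `m₁*(t') = M`, if the lowest
type strictly prefers her separating bundle to the pooled bundle, then there is exactly
one `t_h ∈ (tl, t']` at which the separating utility equals the pooled payoff. -/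
theorem high_threshold_exists_unique
    (tl th M α : ℝ) (f c : ℝ → ℝ → ℝ) (h : ℝ → ℝ) (G : Measure ℝ)
    (t' : ℝ) (m1s m2s : ℝ → ℝ)
    (htl : 0 < tl) (htlth : tl < th) (hM : 0 < M) (hα : 0 ≤ α)
    -- the prior: an atomless Borel probability measure with full support on [tl, th]
    (hG_prob : IsProbabilityMeasure G)
    (hG_atomless : ∀ x : ℝ, G {x} = 0)
    (hG_supp : G (Icc tl th) = 1)
    (hG_full : ∀ s : Set ℝ, IsOpen s → (s ∩ Icc tl th).Nonempty → 0 < G s)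
    -- f is continuous and strictly increasing in t
    (hf_cont : Continuous fun p : ℝ × ℝ => f p.1 p.2)
    (hf_inc : ∀ a : ℝ, 0 ≤ a → StrictMonoOn (fun t => f a t) (Icc tl th))
    -- c is continuous and satisfies the strict single crossing property
    (hc_cont : Continuous fun p : ℝ × ℝ => c p.1 p.2)
    (hsc : ∀ a a' t t', a > a' → 0 ≤ a' → t ∈ Icc tl th → t' ∈ Icc tl th → t > t' →
      c a t + c a' t' < c a t' + c a' t)
    -- h is continuous with h 0 = 0
    (hh_cont : Continuous h) (hh0 : h 0 = 0)
    -- t' is interior, and m1s, m2s form a separating profile on [tl, t']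
    (ht' : t' ∈ Ioo tl th)
    (hm1_cont : ContinuousOn m1s (Icc tl t')) (hm2_cont : ContinuousOn m2s (Icc tl t'))
    (hfeas : ∀ t ∈ Icc tl t', 0 ≤ m1s t ∧ 0 ≤ m2s t ∧ m1s t + m2s t ≤ M)
    (hbelow : ∀ t ∈ Ico tl t', m1s t < M)
    (htop1 : m1s t' = M) (htop2 : m2s t' = 0)
    -- strict incentive compatibility of the separating profile
    (hIC : ∀ t ∈ Icc tl t', ∀ s ∈ Icc tl t', t ≠ s →
      sepUtil α f c h m1s m2s t >
        α * m2s s + f (m1s s) s - c (m1s s) t - h (m2s s))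
    -- the lowest type strictly prefers her separating bundle to the pooled bundle
    (hlow : pooledExp th M f G tl - c M tl < sepUtil α f c h m1s m2s tl) :
    ∃! t_h : ℝ, t_h ∈ Ioc tl t' ∧
      sepUtil α f c h m1s m2s t_h = pooledExp th M f G t_h - c M t_h :=
  high_threshold_exists_unique_general tl th M α f c h G t' m1s m2s hM hG_prob hG_atomless hG_full
    hf_cont hf_inc hc_cont hsc hh_cont hh0 ht' hm1_cont hm2_cont hfeas htop1 htop2 hIC hlow
end

section
/- Global incentive compatibility from first-order conditions (the core of the sufficiency part of Proposition 5 on the binding-constraint region): Under the stated first-order conditions along the signaling path and the strict single crossing condition on marginal cost, for all t, s ∈ I with s ≠ t one has V(m₁*(t), t) > V(m₁*(s), t); that is, every type strictly prefers its own equilibrium cognitive signal to that of any other type. -/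
open Set

/-- The binding-constraint payoff
`V(m, t) = α·(M − m) + f(m, μ(m)) − c(m, t) − h(M − m)`. -/
noncomputable def bindV (α M : ℝ) (f c : ℝ → ℝ → ℝ) (h μ : ℝ → ℝ) (m t : ℝ) : ℝ :=
  α * (M - m) + f m (μ m) - c m t - h (M - m)

/-!
Fix a type `t` and follow the payoff `r ↦ V(m₁*(r), t)` along the signaling path. Its derivative
is `m₁*'(r) · V_m(m₁*(r), t)`, and since the first-order condition makes `V_m(m₁*(r), r)` vanish
and types enter `V` only through the cost, `V_m(m₁*(r), t) = c_m(m₁*(r), r) − c_m(m₁*(r), t)`.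
Single crossing makes this positive for `r < t` and negative for `r > t`, so the payoff peaks
strictly at `r = t`.
-/

theorem apply_lt_apply_of_hasDerivAt_pos_left_neg_right {φ φ' : ℝ → ℝ} {a b t : ℝ}
    (ht : t ∈ Icc a b) (hφ : ∀ r ∈ Icc a b, HasDerivAt φ (φ' r) r)
    (hpos : ∀ r ∈ Ioo a t, 0 < φ' r) (hneg : ∀ r ∈ Ioo t b, φ' r < 0) :
    ∀ s ∈ Icc a b, s ≠ t → φ s < φ t := by
  have hcont : ContinuousOn φ (Icc a b) := fun r hr => (hφ r hr).continuousAt.continuousWithinAt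
  intro s hs hst
  rcases hst.lt_or_gt with hlt | hgt
  · have hmono : StrictMonoOn φ (Icc a t) := by
      refine strictMonoOn_of_deriv_pos (convex_Icc a t)
        (hcont.mono (Icc_subset_Icc_right ht.2)) fun r hr => ?_
      rw [interior_Icc] at hr
      rw [(hφ r ⟨hr.1.le, hr.2.le.trans ht.2⟩).deriv]
      exact hpos r hr
    exact hmono ⟨hs.1, hlt.le⟩ ⟨ht.1, le_rfl⟩ hlt
  · have hanti : StrictAntiOn φ (Icc t b) := by
      refine strictAntiOn_of_deriv_neg (convex_Icc t b)
        (hcont.mono (Icc_subset_Icc_left ht.1)) fun r hr => ?_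
      rw [interior_Icc] at hr
      rw [(hφ r ⟨ht.1.trans hr.1.le, hr.2.le⟩).deriv]
      exact hneg r hr
    exact hanti ⟨le_rfl, ht.2⟩ ⟨hgt.le, hs.2⟩ hgt

theorem hasDerivAt_uncurry_comp {f : ℝ → ℝ → ℝ} {g k : ℝ → ℝ}
    {g' k' x : ℝ} (hf : DifferentiableAt ℝ (fun p : ℝ × ℝ => f p.1 p.2) (g x, k x))
    (hg : HasDerivAt g g' x) (hk : HasDerivAt k k' x) :
    HasDerivAt (fun r => f (g r) (k r))
      (deriv (fun u => f u (k x)) (g x) * g' + deriv (fun v => f (g x) v) (k x) * k') x := by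
  set L := fderiv ℝ (fun p : ℝ × ℝ => f p.1 p.2) (g x, k x)
  have hL : HasFDerivAt (fun p : ℝ × ℝ => f p.1 p.2) L (g x, k x) := hf.hasFDerivAt
  have hfst : HasDerivAt (fun u => f u (k x)) (L (1, 0)) (g x) := by
    have := hL.comp_hasDerivAt (g x) ((hasDerivAt_id (g x)).prodMk (hasDerivAt_const (g x) (k x)))
    exact this
  have hsnd : HasDerivAt (fun v => f (g x) v) (L (0, 1)) (k x) := by
    have := hL.comp_hasDerivAt (k x) ((hasDerivAt_const (k x) (g x)).prodMk (hasDerivAt_id (k x)))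
    exact this
  have hsplit : L (g', k') = g' * L (1, 0) + k' * L (0, 1) := by
    have hv : ((g', k') : ℝ × ℝ) = g' • ((1 : ℝ), (0 : ℝ)) + k' • ((0 : ℝ), (1 : ℝ)) := by
      simp
    rw [hv, map_add, map_smul, map_smul, smul_eq_mul, smul_eq_mul]
  rw [hfst.deriv, hsnd.deriv, mul_comm _ g', mul_comm _ k', ← hsplit]
  exact hL.comp_hasDerivAt x (hg.prodMk hk)

/-- `V_m(m, t)`, expanded by the chain rule; `hFOC` says `bindVDeriv … (m1s t) t = 0`. -/
noncomputable def bindVDeriv (α M : ℝ) (f c : ℝ → ℝ → ℝ) (h μ : ℝ → ℝ) (m t : ℝ) : ℝ :=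
  deriv (fun u => f u (μ m)) m + deriv (fun v => f m v) (μ m) * deriv μ m
    - deriv (fun u => c u t) m - α + deriv h (M - m)

section BindV

variable {α M m t : ℝ} {f c : ℝ → ℝ → ℝ} {h μ : ℝ → ℝ}

theorem hasDerivAt_bindV (hμ : DifferentiableAt ℝ μ m)
    (hf : DifferentiableAt ℝ (fun p : ℝ × ℝ => f p.1 p.2) (m, μ m))
    (hc : DifferentiableAt ℝ (fun u => c u t) m) (hh : DifferentiableAt ℝ h (M - m)) :
    HasDerivAt (fun m => bindV α M f c h μ m t) (bindVDeriv α M f c h μ m t) m := by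
  have hsub : HasDerivAt (fun m => M - m) (-1) m := by
    simpa using (hasDerivAt_id m).const_sub M
  have hfμ := hasDerivAt_uncurry_comp hf (hasDerivAt_id m) hμ.hasDerivAt
  have := (((hsub.const_mul α).add hfμ).sub hc.hasDerivAt).sub (hh.hasDerivAt.comp m hsub)
  exact this.congr_deriv (by simp only [bindVDeriv, id]; ring)

theorem bindVDeriv_sub_bindVDeriv (t' : ℝ) :
    bindVDeriv α M f c h μ m t - bindVDeriv α M f c h μ m t'
      = deriv (fun u => c u t') m - deriv (fun u => c u t) m := by
  simp only [bindVDeriv]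
  ring

end BindV

theorem global_IC_from_FOC_general
    (a b α M : ℝ)
    (f c : ℝ → ℝ → ℝ) (h : ℝ → ℝ) (m1s μ : ℝ → ℝ)
    -- m1s is continuously differentiable with positive derivative on I = [a, b]
    (hm1_cd : ContDiff ℝ 1 m1s)
    (hm1_pos : ∀ t ∈ Icc a b, 0 < deriv m1s t)
    -- μ is the (continuously differentiable) inverse of m1s on J = m1s '' I
    (hμ_diff : ∀ m ∈ m1s '' Icc a b, DifferentiableAt ℝ μ m)
    -- smoothness of f, c, h
    (hf_cd : ContDiff ℝ 1 fun p : ℝ × ℝ => f p.1 p.2)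
    (hc_cd : ContDiff ℝ 1 fun p : ℝ × ℝ => c p.1 p.2)
    (hh_diff : Differentiable ℝ h)
    -- first-order condition along the signaling path
    (hFOC : ∀ t ∈ Icc a b,
      deriv (fun u => f u (μ (m1s t))) (m1s t)
        + deriv (fun v => f (m1s t) v) (μ (m1s t)) * deriv μ (m1s t)
        - deriv (fun u => c u t) (m1s t) - α + deriv h (M - m1s t) = 0)
    -- strict single crossing of the marginal cognitive cost
    (hscm : ∀ m : ℝ, ∀ t ∈ Icc a b, ∀ t' ∈ Icc a b, t' < t →
      deriv (fun u => c u t) m < deriv (fun u => c u t') m) :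
    ∀ t ∈ Icc a b, ∀ s ∈ Icc a b, s ≠ t →
      bindV α M f c h μ (m1s s) t < bindV α M f c h μ (m1s t) t := by
  intro t ht
  have hc_diff (r : ℝ) : Differentiable ℝ fun u => c u r :=
    (hc_cd.differentiable one_ne_zero).comp (differentiable_id.prodMk (differentiable_const r))
  have hpath : ∀ r ∈ Icc a b, HasDerivAt (fun r => bindV α M f c h μ (m1s r) t)
      (deriv m1s r * (deriv (fun u => c u r) (m1s r) - deriv (fun u => c u t) (m1s r))) r := by
    intro r hr
    have hV := hasDerivAt_bindV (α := α) (M := M) (hμ_diff _ ⟨r, hr, rfl⟩)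
      (hf_cd.differentiable one_ne_zero _) (hc_diff t _) (hh_diff _)
    have hshift := bindVDeriv_sub_bindVDeriv (α := α) (M := M) (f := f) (c := c) (h := h) (μ := μ)
      (m := m1s r) (t := t) r
    rw [show bindVDeriv α M f c h μ (m1s r) r = 0 from hFOC r hr, sub_zero] at hshift
    rw [mul_comm, ← hshift]
    exact hV.comp r ((hm1_cd.differentiable one_ne_zero) r).hasDerivAt
  refine apply_lt_apply_of_hasDerivAt_pos_left_neg_right ht hpath (fun r hr => ?_) fun r hr => ?_
  · have hrI : r ∈ Icc a b := ⟨hr.1.le, hr.2.le.trans ht.2⟩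
    exact mul_pos (hm1_pos r hrI) (sub_pos.mpr (hscm _ t ht r hrI hr.2))
  · have hrI : r ∈ Icc a b := ⟨ht.1.trans hr.1.le, hr.2.le⟩
    exact mul_neg_of_pos_of_neg (hm1_pos r hrI) (sub_neg.mpr (hscm _ r hrI t ht hr.1))

/-- Global incentive compatibility from first-order conditions (sufficiency part of
Proposition 5 on the binding-constraint region): under the first-order condition along
the signaling path and strict single crossing of the marginal cost, every type strictly
prefers its own equilibrium cognitive signal to that of any other type. -/
theorem global_IC_from_FOC
    (a b α M : ℝ) (hab : a < b)
    (f c : ℝ → ℝ → ℝ) (h : ℝ → ℝ) (m1s μ : ℝ → ℝ)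
    -- m1s is continuously differentiable with positive derivative on I = [a, b]
    (hm1_cd : ContDiff ℝ 1 m1s)
    (hm1_pos : ∀ t ∈ Icc a b, 0 < deriv m1s t)
    -- μ is the (continuously differentiable) inverse of m1s on J = m1s '' I
    (hμ_inv : ∀ t ∈ Icc a b, μ (m1s t) = t)
    (hμ_diff : ∀ m ∈ m1s '' Icc a b, DifferentiableAt ℝ μ m)
    (hμ_cont : ContinuousOn (deriv μ) (m1s '' Icc a b))
    -- smoothness of f, c, h
    (hf_cd : ContDiff ℝ 1 fun p : ℝ × ℝ => f p.1 p.2)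
    (hc_cd : ContDiff ℝ 1 fun p : ℝ × ℝ => c p.1 p.2)
    (hh_diff : Differentiable ℝ h)
    -- first-order condition along the signaling path
    (hFOC : ∀ t ∈ Icc a b,
      deriv (fun u => f u (μ (m1s t))) (m1s t)
        + deriv (fun v => f (m1s t) v) (μ (m1s t)) * deriv μ (m1s t)
        - deriv (fun u => c u t) (m1s t) - α + deriv h (M - m1s t) = 0)
    -- strict single crossing of the marginal cognitive cost
    (hscm : ∀ m : ℝ, ∀ t ∈ Icc a b, ∀ t' ∈ Icc a b, t' < t →
      deriv (fun u => c u t) m < deriv (fun u => c u t') m) :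
    ∀ t ∈ Icc a b, ∀ s ∈ Icc a b, s ≠ t →
      bindV α M f c h μ (m1s s) t < bindV α M f c h μ (m1s t) t :=
  global_IC_from_FOC_general a b α M f c h m1s μ hm1_cd hm1_pos hμ_diff hf_cd hc_cd hh_diff hFOC
    hscm
end
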